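/- arXiv:2301.00458 — 3 statements merged into one kernel-verified Lean document; each statement's English description precedes it below -/
import Mathlib

section
/- Let p be a prime, let c, k, r be natural numbers with 1 ≤ c ≤ p−1, k ≥ 1, and 1 ≤ r < p^k. Then (p−1) · v_p(C(c·p^k, r)) = (p−1)·k + s_p(r) − s_p(r−1) − 1, where v_p denotes the p-adic valuation of a natural number. -/
/-- The digit sum of `n` in base `p`. -/
def digitSum (p n : ℕ) : ℕ := (Nat.digits p n).sum

lemma digitSum_add_mul {p : ℕ} (hp : 1 < p) (a b : ℕ) (ha : a < p) :
    digitSum p (a + p * b) = a + digitSum p b := by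
  by_cases h0 : a = 0 ∧ b = 0
  · simp [digitSum, h0.1, h0.2]
  · have := Nat.digits_add p hp a b ha (by tauto)
    simp [digitSum, this]

lemma digitSum_self {p : ℕ} (hp : 1 < p) (a : ℕ) (ha : a < p) : digitSum p a = a := by
  have := digitSum_add_mul hp a 0 ha
  simpa [digitSum] using this

lemma digitSum_pos {p n : ℕ} (hn : 0 < n) : 0 < digitSum p n := by
  have h1 : Nat.digits p n ≠ [] := Nat.digits_ne_nil_iff_ne_zero.mpr hn.ne'
  have h2 := Nat.getLast_digit_ne_zero p hn.ne'
  have h3 : (Nat.digits p n).getLast h1 ∈ Nat.digits p n := List.getLast_mem h1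
  exact lt_of_lt_of_le (Nat.pos_of_ne_zero h2)
    (List.single_le_sum (fun _ _ => Nat.zero_le _) _ h3)

lemma digitSum_split {p : ℕ} (hp : 1 < p) (n : ℕ) :
    digitSum p n = n % p + digitSum p (n / p) := by
  conv_lhs => rw [← Nat.mod_add_div n p]
  exact digitSum_add_mul hp _ _ (Nat.mod_lt _ (by omega))

lemma digitSum_add_pow_mul {p : ℕ} (hp : 1 < p) (k : ℕ) :
    ∀ n m, n < p ^ k → digitSum p (n + p ^ k * m) = digitSum p n + digitSum p m := by
  induction k with
  | zero =>
    intro n m hn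
    have : n = 0 := by simpa using hn
    simp [this, digitSum]
  | succ k ih =>
    intro n m hn
    have hp0 : 0 < p := by omega
    have h1 : n + p ^ (k + 1) * m = n % p + p * (n / p + p ^ k * m) := by
      conv_lhs => rw [← Nat.mod_add_div n p]
      ring
    have hq : n / p < p ^ k := by
      rw [Nat.div_lt_iff_lt_mul hp0, ← pow_succ]; exact hn
    rw [h1, digitSum_add_mul hp _ _ (Nat.mod_lt _ hp0), ih _ m hq,
      digitSum_split hp n]
    omega

lemma digitSum_compl {p : ℕ} (hp : 1 < p) (k : ℕ) :
    ∀ m, m < p ^ k → digitSum p (p ^ k - 1 - m) + digitSum p m = k * (p - 1) := by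
  induction k with
  | zero =>
    intro m hm
    have : m = 0 := by simpa using hm
    simp [this, digitSum]
  | succ k ih =>
    intro m hm
    have hp0 : 0 < p := by omega
    have hd : m % p < p := Nat.mod_lt _ hp0
    have hq : m / p < p ^ k := by
      rw [Nat.div_lt_iff_lt_mul hp0, ← pow_succ]; exact hm
    have hP : 0 < p ^ k := Nat.pow_pos hp0
    have hdec : p ^ (k + 1) - 1 - m = (p - 1 - m % p) + p * (p ^ k - 1 - m / p) := by
      have h1 : m % p + p * (m / p) = m := Nat.mod_add_div m p
      have e1 : p * (p ^ k - 1 - m / p) + p * (m / p) = p * (p ^ k - 1) := by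
        rw [← Nat.mul_add]; congr 1; omega
      have e2 : p * (p ^ k - 1) + p = p * p ^ k := by
        rw [← Nat.mul_succ]; congr 1; omega
      have e3 : p ^ (k + 1) = p * p ^ k := by ring
      omega
    rw [hdec, digitSum_add_mul hp _ _ (by omega), digitSum_split hp m]
    have hih := ih _ hq
    have hK : (k + 1) * (p - 1) = k * (p - 1) + (p - 1) := by ring
    omega

/-- The exact valuation computation in the proof of Lemma 3.1 of the paper:
for a prime `p`, `1 ≤ c ≤ p - 1`, `k ≥ 1` and `1 ≤ r < p ^ k`, one has
`(p - 1) * v_p(C(c * p ^ k, r)) = (p - 1) * k + s_p(r) - s_p(r - 1) - 1`. -/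
theorem valuation_choose_c_pow (p c k r : ℕ) (hp : p.Prime)
    (hc1 : 1 ≤ c) (hc2 : c ≤ p - 1) (hk : 1 ≤ k)
    (hr1 : 1 ≤ r) (hr2 : r < p ^ k) :
    ((p : ℤ) - 1) * ((Nat.choose (c * p ^ k) r).factorization p : ℤ) =
      ((p : ℤ) - 1) * (k : ℤ) + (digitSum p r : ℤ) - (digitSum p (r - 1) : ℤ) - 1 := by
  haveI : Fact p.Prime := ⟨hp⟩
  have hp1 : 1 < p := hp.one_lt
  have hPk : 0 < p ^ k := Nat.pow_pos (by omega)
  have hrN : r ≤ c * p ^ k := le_trans hr2.le (Nat.le_mul_of_pos_left _ hc1)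
  have hK : (p - 1) * padicValNat p (Nat.choose (c * p ^ k) r) =
      digitSum p r + digitSum p (c * p ^ k - r) - digitSum p (c * p ^ k) := by
    simpa [digitSum] using sub_one_mul_padicValNat_choose_eq_sub_sum_digits (p := p) hrN
  have hsN : digitSum p (c * p ^ k) = c := by
    have h := digitSum_add_pow_mul hp1 k 0 c hPk
    have h0 : digitSum p 0 = 0 := by simp [digitSum]
    simp only [zero_add, h0] at h
    rw [mul_comm, h, digitSum_self hp1 c (by omega)]
  have hsub : c * p ^ k - r = (p ^ k - 1 - (r - 1)) + p ^ k * (c - 1) := by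
    have e : c * p ^ k = p ^ k * (c - 1) + p ^ k := by
      rw [← Nat.mul_succ, mul_comm]; congr 1; omega
    omega
  have hsNr : digitSum p (c * p ^ k - r) =
      digitSum p (p ^ k - 1 - (r - 1)) + (c - 1) := by
    rw [hsub, digitSum_add_pow_mul hp1 k _ _ (by omega),
      digitSum_self hp1 (c - 1) (by omega)]
  have hcomp := digitSum_compl hp1 k (r - 1) (by omega)
  have hsr : 0 < digitSum p r := digitSum_pos hr1
  rw [Nat.factorization_def _ hp]
  have hc1' : ((((p - 1) * padicValNat p (Nat.choose (c * p ^ k) r) : ℕ)) : ℤ) =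
      ((p : ℤ) - 1) * (padicValNat p (Nat.choose (c * p ^ k) r) : ℤ) := by
    push_cast [Nat.cast_sub hp.one_le]; ring
  have hc2' : ((k * (p - 1) : ℕ) : ℤ) = ((p : ℤ) - 1) * (k : ℤ) := by
    push_cast [Nat.cast_sub hp.one_le]; ring
  rw [← hc1', ← hc2']
  omega
end

section
/- Let Φ be a finite reduced crystallographic root system in a finite-dimensional real vector space, and let Δ be a base of Φ with associated set of positive roots Φ⁺ (the roots expressible as nonnegative integer combinations of elements of Δ). Then there exists a total (linear) order < on Φ⁺ which is compatible, meaning: (1) whenever λ, μ ∈ Φ⁺ with λ < μ and λ + μ ∈ Φ, then λ + μ ∈ Φ⁺ and λ < λ + μ < μ; and (2) whenever λ, μ ∈ Φ⁺ and λ + μ ∈ Φ⁺, then at least one of λ, μ precedes λ + μ in the order. -/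
open Finset

/-!
Fix a linear form `f` with `f δ = 1` on the base, so that `f` is positive on `Φ⁺`, and a
linear form `g` in general position. Ordering `Φ⁺` by the slope `g α / f α` gives a total order,
since no two distinct positive roots are proportional. As both forms are additive, the slope of
`λ + μ` is the mediant of the slopes of `λ` and `μ`, hence lies strictly between them; this is
compatibility (for condition (2), `λ ≠ μ` because `2λ` is not a root).
-/

theorem LinearIndepOn.exists_dual_eq_one {K V : Type*} [Field K] [AddCommGroup V] [Module K V]
    {s : Set V} (hs : LinearIndepOn K id s) : ∃ f : Module.Dual K V, ∀ v ∈ s, f v = 1 := by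
  classical
  let b := Module.Basis.extend hs
  refine ⟨b.constr K fun x => if (x : V) ∈ s then 1 else 0, fun v hv => ?_⟩
  have hb : b ⟨v, hs.subset_extend _ hv⟩ = v := Module.Basis.extend_apply_self hs _
  rw [← hb, b.constr_basis]
  simp [hv]

theorem add_div_add_mem_Ioo {K : Type*} [Field K] [LinearOrder K] [IsStrictOrderedRing K]
    {a b c d : K} (hb : 0 < b) (hd : 0 < d) (h : a / b < c / d) :
    (a + c) / (b + d) ∈ Set.Ioo (a / b) (c / d) := by
  have hbd : 0 < b + d := add_pos hb hd
  rw [div_lt_div_iff₀ hb hd] at h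
  constructor
  · rw [div_lt_div_iff₀ hb hbd]; linarith
  · rw [div_lt_div_iff₀ hbd hd]; linarith

section Slope

variable {V : Type*} [AddCommGroup V] [Module ℝ V] {f : Module.Dual ℝ V}

theorem Module.Dual.pos_of_eq_sum_nat_smul {Δ : Finset V} (hf : ∀ δ ∈ Δ, 0 < f δ) {c : V → ℕ}
    {α : V} (hα : α = ∑ δ ∈ Δ, (c δ : ℝ) • δ) (hα0 : α ≠ 0) : 0 < f α := by
  obtain ⟨δ, hδ, hcδ⟩ : ∃ δ ∈ Δ, c δ ≠ 0 := by
    by_contra! hc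
    exact hα0 (hα ▸ sum_eq_zero fun δ hδ => by simp [hc δ hδ])
  rw [hα, map_sum]
  refine sum_pos' (fun δ hδ => ?_) ⟨δ, hδ, ?_⟩
  · simpa using mul_nonneg (Nat.cast_nonneg (c δ)) (hf δ hδ).le
  · simpa using mul_pos (Nat.cast_pos.mpr (Nat.pos_of_ne_zero hcδ)) (hf δ hδ)

theorem Module.Dual.exists_injOn_div {P : Finset V} (hf : ∀ α ∈ P, 0 < f α)
    (hray : ∀ α ∈ P, ∀ β ∈ P, ∀ t : ℝ, 0 < t → β = t • α → β = α) :
    ∃ g : Module.Dual ℝ V, Set.InjOn (fun α => g α / f α) P := by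
  let v : {p : P × P // p.1 ≠ p.2} → V := fun p => f p.1.2 • (p.1.1 : V) - f p.1.1 • (p.1.2 : V)
  have hv : ∀ p, v p ≠ 0 := by
    rintro ⟨⟨⟨α, hα⟩, ⟨β, hβ⟩⟩, hne⟩ h
    have hfα := hf α hα
    have hβα : β = (f β / f α) • α := by
      rw [div_eq_inv_mul, mul_smul, eq_inv_smul_iff₀ hfα.ne']
      exact (sub_eq_zero.mp h).symm
    exact hne (Subtype.ext (hray α hα β hβ _ (div_pos (hf β hβ) hfα) hβα).symm)
  obtain ⟨g, hg⟩ := Module.exists_dual_forall_apply_ne_zero (K := ℝ) v hv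
  refine ⟨g, fun α hα β hβ hαβ => by_contra fun hne => hg ⟨(⟨α, hα⟩, ⟨β, hβ⟩), ?_⟩ ?_⟩
  · simpa using hne
  · rw [div_eq_div_iff (hf α hα).ne' (hf β hβ).ne'] at hαβ
    simp only [v, map_sub, map_smul, smul_eq_mul]
    linarith

end Slope

theorem exists_compatible_ordering_on_positive_roots_general
    {V : Type*} [NormedAddCommGroup V] [InnerProductSpace ℝ V]
    (Φ : Finset V)
    -- `0` is not a root
    (h0 : (0 : V) ∉ Φ)
    -- reduced: the only multiples of a root `α` which are roots are `±α`
    (hred : ∀ α ∈ Φ, ∀ t : ℝ, t • α ∈ Φ → t = 1 ∨ t = -1)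
    -- `Δ` is a base of `Φ`, `Φpos` the associated set of positive roots
    (Δ : Finset V)
    (hind : LinearIndependent ℝ (fun δ : Δ => (δ : V)))
    (Φpos : Finset V)
    (hpos : ∀ α, α ∈ Φpos ↔ α ∈ Φ ∧ ∃ c : V → ℕ, α = ∑ δ ∈ Δ, (c δ : ℝ) • δ)
    (hbase : ∀ α ∈ Φ, α ∈ Φpos ∨ -α ∈ Φpos) :
    ∃ lt : V → V → Prop,
      -- `lt` is a strict total order on `Φpos`
      (∀ l ∈ Φpos, ¬ lt l l) ∧
      (∀ l ∈ Φpos, ∀ m ∈ Φpos, ∀ n ∈ Φpos, lt l m → lt m n → lt l n) ∧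
      (∀ l ∈ Φpos, ∀ m ∈ Φpos, l ≠ m → lt l m ∨ lt m l) ∧
      -- compatibility condition (1)
      (∀ l ∈ Φpos, ∀ m ∈ Φpos, lt l m → l + m ∈ Φ →
        l + m ∈ Φpos ∧ lt l (l + m) ∧ lt (l + m) m) ∧
      -- compatibility condition (2)
      (∀ l ∈ Φpos, ∀ m ∈ Φpos, l + m ∈ Φpos → lt l (l + m) ∨ lt m (l + m)) := by
  obtain ⟨f, hf⟩ := LinearIndepOn.exists_dual_eq_one hind
  have hΦ : ∀ α ∈ Φpos, α ∈ Φ := fun α hα => ((hpos α).1 hα).1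
  have hfpos : ∀ α ∈ Φpos, 0 < f α := fun α hα => by
    obtain ⟨hαΦ, c, hc⟩ := (hpos α).1 hα
    exact f.pos_of_eq_sum_nat_smul (fun δ hδ => by simp [hf δ hδ]) hc (ne_of_mem_of_not_mem hαΦ h0)
  obtain ⟨g, hg⟩ := f.exists_injOn_div hfpos fun α hα β hβ t ht hβt => by
    obtain rfl : t = 1 := (hred α (hΦ α hα) t (hβt ▸ hΦ β hβ)).resolve_right (by linarith)
    simpa using hβt
  have hclosed : ∀ l ∈ Φpos, ∀ m ∈ Φpos, l + m ∈ Φ → l + m ∈ Φpos := fun l hl m hm hlm =>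
    (hbase _ hlm).resolve_right fun hneg => by
      have := hfpos _ hneg
      simp only [map_neg, map_add] at this
      linarith [hfpos l hl, hfpos m hm]
  have hmediant : ∀ l ∈ Φpos, ∀ m ∈ Φpos, g l / f l < g m / f m →
      g (l + m) / f (l + m) ∈ Set.Ioo (g l / f l) (g m / f m) := fun l hl m hm h => by
    simpa only [map_add] using add_div_add_mem_Ioo (hfpos l hl) (hfpos m hm) h
  refine ⟨fun l m => g l / f l < g m / f m, fun _ _ => lt_irrefl _,
    fun _ _ _ _ _ _ => lt_trans, fun l hl m hm hne => lt_or_gt_of_ne (hg.ne hl hm hne),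
    fun l hl m hm hlt hlm => ⟨hclosed l hl m hm hlm, hmediant l hl m hm hlt⟩, fun l hl m hm hlm => ?_⟩
  have hne : l ≠ m := by
    rintro rfl
    have := hred l (hΦ l hl) 2 (by rw [two_smul]; exact hΦ _ hlm)
    norm_num at this
  rcases lt_or_gt_of_ne (hg.ne hl hm hne) with h | h
  · exact Or.inl (hmediant l hl m hm h).1
  · exact Or.inr (add_comm m l ▸ (hmediant m hm l hl h).1)

/-- Corollary 2.1 of the paper (deduced from Papi's theorem): the set of positive
roots of a finite reduced crystallographic root system admits a compatible ordering,
i.e. a total order `<` on `Φ⁺` such that (1) if `λ < μ` and `λ + μ` is a root then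
`λ + μ ∈ Φ⁺` and `λ < λ + μ < μ`, and (2) if `λ, μ, λ + μ ∈ Φ⁺` then one of `λ, μ`
precedes `λ + μ`. -/
theorem exists_compatible_ordering_on_positive_roots
    {V : Type*} [NormedAddCommGroup V] [InnerProductSpace ℝ V] [FiniteDimensional ℝ V]
    (Φ : Finset V)
    -- `Φ` spans `V`
    (hspan : Submodule.span ℝ (Φ : Set V) = ⊤)
    -- `0` is not a root
    (h0 : (0 : V) ∉ Φ)
    -- reduced: the only multiples of a root `α` which are roots are `±α`
    (hred : ∀ α ∈ Φ, ∀ t : ℝ, t • α ∈ Φ → t = 1 ∨ t = -1)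
    -- `Φ` is stable under the reflection in each root
    (hrefl : ∀ α ∈ Φ, ∀ β ∈ Φ, β - ((2 * (inner ℝ β α : ℝ) / (inner ℝ α α : ℝ)) • α) ∈ Φ)
    -- crystallographic: the Cartan numbers are integers
    (hcrys : ∀ α ∈ Φ, ∀ β ∈ Φ, ∃ n : ℤ, 2 * (inner ℝ β α : ℝ) / (inner ℝ α α : ℝ) = (n : ℝ))
    -- `Δ` is a base of `Φ`, `Φpos` the associated set of positive roots
    (Δ : Finset V) (hΔ : Δ ⊆ Φ)
    (hind : LinearIndependent ℝ (fun δ : Δ => (δ : V)))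
    (Φpos : Finset V)
    (hpos : ∀ α, α ∈ Φpos ↔ α ∈ Φ ∧ ∃ c : V → ℕ, α = ∑ δ ∈ Δ, (c δ : ℝ) • δ)
    (hbase : ∀ α ∈ Φ, α ∈ Φpos ∨ -α ∈ Φpos) :
    ∃ lt : V → V → Prop,
      -- `lt` is a strict total order on `Φpos`
      (∀ l ∈ Φpos, ¬ lt l l) ∧
      (∀ l ∈ Φpos, ∀ m ∈ Φpos, ∀ n ∈ Φpos, lt l m → lt m n → lt l n) ∧
      (∀ l ∈ Φpos, ∀ m ∈ Φpos, l ≠ m → lt l m ∨ lt m l) ∧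
      -- compatibility condition (1)
      (∀ l ∈ Φpos, ∀ m ∈ Φpos, lt l m → l + m ∈ Φ →
        l + m ∈ Φpos ∧ lt l (l + m) ∧ lt (l + m) m) ∧
      -- compatibility condition (2)
      (∀ l ∈ Φpos, ∀ m ∈ Φpos, l + m ∈ Φpos → lt l (l + m) ∨ lt m (l + m)) :=
  exists_compatible_ordering_on_positive_roots_general Φ h0 hred Δ hind Φpos hpos hbase
end

section
/- For a list l of natural numbers, let inv(l) denote the number of inversions of l, i.e., the number of pairs of positions (i, j) with i < j and l_i > l_j. Let f and e be lists of natural numbers and let a, c, m be natural numbers with c < m < a. Then inv(f ++ [m] ++ e) < inv(f ++ [a, c] ++ e). -/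
open Finset

/-- The number of inversions of a list of natural numbers: the number of pairs of
positions `(i, j)` with `i < j` and `l_i > l_j`. -/
def inversions (l : List ℕ) : ℕ :=
  ((Finset.range l.length ×ˢ Finset.range l.length).filter
    (fun q => q.1 < q.2 ∧ l.getD q.2 0 < l.getD q.1 0)).card

/-- number of positions of `l` holding a value less than `x` -/
def cnt (x : ℕ) (l : List ℕ) : ℕ :=
  ((Finset.range l.length).filter (fun j => l.getD j 0 < x)).card

lemma card_filter_range_succ (n : ℕ) (p : ℕ → Prop) [DecidablePred p] :
    ((range (n+1)).filter p).card
      = (if p 0 then 1 else 0) + ((range n).filter (fun j => p (j+1))).card := by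
  rw [Finset.card_filter, Finset.card_filter, Finset.sum_range_succ']
  ring

lemma cnt_cons (x y : ℕ) (l : List ℕ) :
    cnt x (y :: l) = (if y < x then 1 else 0) + cnt x l := by
  unfold cnt
  simp only [List.length_cons]
  rw [card_filter_range_succ]
  simp

lemma cnt_append (x : ℕ) (u v : List ℕ) :
    cnt x (u ++ v) = cnt x u + cnt x v := by
  induction u with
  | nil => simp [cnt]
  | cons y u ih =>
      rw [List.cons_append, cnt_cons, cnt_cons, ih]; ring

lemma cnt_mono (l : List ℕ) {x y : ℕ} (h : x ≤ y) : cnt x l ≤ cnt y l := by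
  apply Finset.card_le_card
  intro j hj
  simp only [Finset.mem_filter] at hj ⊢
  exact ⟨hj.1, lt_of_lt_of_le hj.2 h⟩

lemma inversions_cons (x : ℕ) (l : List ℕ) :
    inversions (x :: l) = cnt x l + inversions l := by
  unfold inversions cnt
  simp only [List.length_cons]
  rw [Finset.card_filter, Finset.card_filter, Finset.card_filter,
      Finset.sum_product, Finset.sum_product, Finset.sum_range_succ']
  simp only [Finset.sum_range_succ']
  simp only [List.getD_cons_succ, List.getD_cons_zero, Nat.add_lt_add_iff_right,
    Nat.not_lt_zero, false_and, if_false, add_zero, Nat.zero_lt_succ, true_and,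
    lt_self_iff_false]
  omega

/-- The combinatorial content of Lemma 5.1 of the paper (Counting inversions):
replacing an adjacent wrongly-ordered pair `X_a X_c` (with `c < a`) by a single
variable `X_m` with `c < m < a` strictly decreases the number of inversions. -/
theorem inversions_replace_pair_lt (f e : List ℕ) (a c m : ℕ)
    (hcm : c < m) (hma : m < a) :
    inversions (f ++ [m] ++ e) < inversions (f ++ [a, c] ++ e) := by
  induction f with
  | nil =>
      simp only [List.nil_append, List.cons_append, List.nil_append]
      rw [inversions_cons, inversions_cons, inversions_cons, cnt_cons]
      have h1 : cnt m e ≤ cnt a e := cnt_mono e hma.le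
      have h2 : (if c < a then 1 else 0) = 1 := if_pos (hcm.trans hma)
      omega
  | cons x f ih =>
      simp only [List.cons_append]
      rw [inversions_cons, inversions_cons]
      have hcnt : cnt x (f ++ [m] ++ e) ≤ cnt x (f ++ [a, c] ++ e) := by
        rw [cnt_append, cnt_append, cnt_append, cnt_append]
        have : cnt x [m] ≤ cnt x [a, c] := by
          rw [show [a, c] = [a] ++ [c] from rfl, cnt_append]
          simp only [cnt, List.length_singleton]
          have h : ∀ y : ℕ, ((range 1).filter (fun j => [y].getD j 0 < x)).card
              = if y < x then 1 else 0 := by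
            intro y; by_cases hyx : y < x <;> simp [Finset.filter_singleton, hyx]
          rw [h, h, h]
          have : m < x → c < x := fun hmx => hcm.trans hmx
          by_cases hmx : m < x <;> simp [hmx, this]
        omega
      omega
end
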